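/- Let A, B be unital *-algebras and Ψ: B⊗A → A⊗B a normal twist satisfying the two hexagon conditions, such that Ψ' := Ψ∘τ is *-compatible, i.e., (∗_A⊗∗_B) = Ψ'∘(∗_A⊗∗_B)∘Ψ'. Then ∗_Ψ := Ψ∘τ∘(∗_A⊗∗_B) is an involution on the twisted tensor product algebra A⊗_Ψ B: it squares to the identity and is anti-multiplicative for the twisted product. -/

import Mathlib

open TensorProduct

/-- The twisted multiplication m_Ψ := (m_A ⊗ m_B)(id_A ⊗ Ψ ⊗ id_B) on A ⊗ B. -/
noncomputable def twistedMul (A B : Type*) [Ring A] [Ring B]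
    [Algebra ℂ A] [Algebra ℂ B] (Ψ : B ⊗[ℂ] A →ₗ[ℂ] A ⊗[ℂ] B) :
    (A ⊗[ℂ] B) ⊗[ℂ] (A ⊗[ℂ] B) →ₗ[ℂ] A ⊗[ℂ] B :=
  TensorProduct.map (LinearMap.mul' ℂ A) (LinearMap.mul' ℂ B)
    ∘ₗ (TensorProduct.assoc ℂ A A (B ⊗[ℂ] B)).symm.toLinearMap
    ∘ₗ TensorProduct.map LinearMap.id (TensorProduct.assoc ℂ A B B).toLinearMap
    ∘ₗ TensorProduct.map LinearMap.id (TensorProduct.map Ψ LinearMap.id)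
    ∘ₗ TensorProduct.map LinearMap.id (TensorProduct.assoc ℂ B A B).symm.toLinearMap
    ∘ₗ (TensorProduct.assoc ℂ A B (A ⊗[ℂ] B)).toLinearMap

/-!
In A ⊗_Ψ B one has m_Ψ((a⊗b)⊗(c⊗d)) = (a⊗1)·Ψ(b⊗c)·(1⊗d), products taken in the untwisted
algebra A ⊗ B. The hexagon conditions read Ψ(βb⊗a) = m_Ψ((1⊗β)⊗Ψ(b⊗a)) and
Ψ(b⊗aα) = m_Ψ(Ψ(b⊗a)⊗(α⊗1)); combined, Ψ(βb⊗aα) = Σ m_Ψ(Ψ(β⊗x)⊗Ψ(y⊗α)) when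
Ψ(b⊗a) = Σ x⊗y. The anti-multiplicative map τ∘(∗_A⊗∗_B) sends (a⊗1)·w·(1⊗d) to
(d*⊗1)·τ(w*)·(1⊗a*) in B ⊗ A, so the combined hexagon identity reduces ∗_Ψ(m_Ψ(...)) to
Ψ(τ(Ψ(b⊗c)*)), which *-compatibility evaluates to c*⊗b*. Involutivity is *-compatibility
followed by (∗_A⊗∗_B)² = id.
-/

section TensorMul

variable {R A B M : Type*} [CommSemiring R] [Semiring A] [Semiring B] [Algebra R A]
  [Algebra R B] [AddCommMonoid M] [Module R M]

theorem map_id_mul'_assoc_tmul (z : M ⊗[R] B) (y : B) :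
    map LinearMap.id (LinearMap.mul' R B) (TensorProduct.assoc R M B B (z ⊗ₜ y)) =
      map LinearMap.id (LinearMap.mulRight R y) z := by
  induction z using TensorProduct.induction_on with
  | zero => simp
  | tmul m b => simp
  | add x x' hx hx' => simp_all [add_tmul]

theorem map_mul'_id_assoc_symm_tmul (x : A) (z : A ⊗[R] M) :
    map (LinearMap.mul' R A) LinearMap.id ((TensorProduct.assoc R A A M).symm (x ⊗ₜ z)) =
      map (LinearMap.mulLeft R x) LinearMap.id z := by
  induction z using TensorProduct.induction_on with
  | zero => simp
  | tmul a m => simp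
  | add z z' hz hz' => simp_all [tmul_add]

theorem map_mul'_mul'_assoc_tmul (a : A) (z : A ⊗[R] B) (d : B) :
    map (LinearMap.mul' R A) (LinearMap.mul' R B)
        ((TensorProduct.assoc R A A (B ⊗[R] B)).symm
          (a ⊗ₜ TensorProduct.assoc R A B B (z ⊗ₜ d))) =
      map (LinearMap.mulLeft R a) (LinearMap.mulRight R d) z := by
  induction z using TensorProduct.induction_on with
  | zero => simp
  | tmul x y => simp
  | add z z' hz hz' => simp_all [add_tmul, tmul_add]

end TensorMul

section Twist

variable {A B : Type*} [Ring A] [Ring B] [Algebra ℂ A] [Algebra ℂ B]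

def HexagonLeft (Ψ : B ⊗[ℂ] A →ₗ[ℂ] A ⊗[ℂ] B) : Prop :=
  (TensorProduct.map (LinearMap.id : A →ₗ[ℂ] A) (LinearMap.mul' ℂ B))
      ∘ₗ (TensorProduct.assoc ℂ A B B).toLinearMap
      ∘ₗ TensorProduct.map Ψ LinearMap.id
      ∘ₗ (TensorProduct.assoc ℂ B A B).symm.toLinearMap
      ∘ₗ TensorProduct.map LinearMap.id Ψ
    = Ψ ∘ₗ TensorProduct.map (LinearMap.mul' ℂ B) LinearMap.id
        ∘ₗ (TensorProduct.assoc ℂ B B A).symm.toLinearMap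

def HexagonRight (Ψ : B ⊗[ℂ] A →ₗ[ℂ] A ⊗[ℂ] B) : Prop :=
  (TensorProduct.map (LinearMap.mul' ℂ A) (LinearMap.id : B →ₗ[ℂ] B))
      ∘ₗ (TensorProduct.assoc ℂ A A B).symm.toLinearMap
      ∘ₗ TensorProduct.map LinearMap.id Ψ
      ∘ₗ (TensorProduct.assoc ℂ A B A).toLinearMap
      ∘ₗ TensorProduct.map Ψ LinearMap.id
    = Ψ ∘ₗ TensorProduct.map LinearMap.id (LinearMap.mul' ℂ A)
        ∘ₗ (TensorProduct.assoc ℂ B A A).toLinearMap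

variable (Ψ : B ⊗[ℂ] A →ₗ[ℂ] A ⊗[ℂ] B)

theorem twistedMul_tmul_tmul (a : A) (b : B) (c : A) (d : B) :
    twistedMul A B Ψ ((a ⊗ₜ b) ⊗ₜ (c ⊗ₜ d)) =
      map (LinearMap.mulLeft ℂ a) (LinearMap.mulRight ℂ d) (Ψ (b ⊗ₜ c)) := by
  simp [twistedMul, map_mul'_mul'_assoc_tmul]

theorem twistedMul_one_tmul_tmul (β : B) (x : A) (y : B) :
    twistedMul A B Ψ ((1 ⊗ₜ β) ⊗ₜ (x ⊗ₜ y)) =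
      map LinearMap.id (LinearMap.mulRight ℂ y) (Ψ (β ⊗ₜ x)) := by
  rw [twistedMul_tmul_tmul, LinearMap.mulLeft_one]

theorem twistedMul_tmul_tmul_one (x : A) (y : B) (α : A) :
    twistedMul A B Ψ ((x ⊗ₜ y) ⊗ₜ (α ⊗ₜ 1)) =
      map (LinearMap.mulLeft ℂ x) LinearMap.id (Ψ (y ⊗ₜ α)) := by
  rw [twistedMul_tmul_tmul, LinearMap.mulRight_one]

theorem twistedMul_tmul_left (p : A) (q : B) (w : A ⊗[ℂ] B) :
    twistedMul A B Ψ ((p ⊗ₜ q) ⊗ₜ w) =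
      map (LinearMap.mulLeft ℂ p) LinearMap.id (twistedMul A B Ψ ((1 ⊗ₜ q) ⊗ₜ w)) := by
  induction w using TensorProduct.induction_on with
  | zero => simp
  | tmul c d =>
    rw [twistedMul_tmul_tmul, twistedMul_one_tmul_tmul, map_map, LinearMap.comp_id,
      LinearMap.id_comp]
  | add w w' hw hw' => simp only [tmul_add, map_add, hw, hw']

variable {Ψ}

theorem HexagonLeft.apply_mul_tmul (hHex1 : HexagonLeft Ψ) (β b : B) (a : A) :
    Ψ ((β * b) ⊗ₜ a) = twistedMul A B Ψ ((1 ⊗ₜ β) ⊗ₜ Ψ (b ⊗ₜ a)) := by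
  have h := LinearMap.congr_fun hHex1 (β ⊗ₜ (b ⊗ₜ a))
  simp only [LinearMap.comp_apply, LinearEquiv.coe_coe, map_tmul, LinearMap.id_apply,
    assoc_symm_tmul, LinearMap.mul'_apply] at h
  rw [← h]
  induction Ψ (b ⊗ₜ a) using TensorProduct.induction_on with
  | zero => simp
  | tmul x y => simp [map_id_mul'_assoc_tmul, twistedMul_one_tmul_tmul]
  | add w w' hw hw' => simp only [tmul_add, map_add, hw, hw']

theorem HexagonRight.apply_tmul_mul (hHex2 : HexagonRight Ψ) (b : B) (a α : A) :
    Ψ (b ⊗ₜ (a * α)) = twistedMul A B Ψ (Ψ (b ⊗ₜ a) ⊗ₜ (α ⊗ₜ 1)) := by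
  have h := LinearMap.congr_fun hHex2 ((b ⊗ₜ a) ⊗ₜ α)
  simp only [LinearMap.comp_apply, LinearEquiv.coe_coe, map_tmul, LinearMap.id_apply,
    assoc_tmul, LinearMap.mul'_apply] at h
  rw [← h]
  induction Ψ (b ⊗ₜ a) using TensorProduct.induction_on with
  | zero => simp
  | tmul x y => simp [map_mul'_id_assoc_symm_tmul, twistedMul_tmul_tmul_one]
  | add w w' hw hw' => simp only [map_add, add_tmul, hw, hw']

theorem HexagonLeft.twistedMul_map_mulRight_tmul_one (hHex1 : HexagonLeft Ψ)
    (z : A ⊗[ℂ] B) (y : B) (α : A) :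
    twistedMul A B Ψ (map LinearMap.id (LinearMap.mulRight ℂ y) z ⊗ₜ (α ⊗ₜ 1)) =
      twistedMul A B Ψ (z ⊗ₜ Ψ (y ⊗ₜ α)) := by
  induction z using TensorProduct.induction_on with
  | zero => simp
  | tmul p q =>
    rw [map_tmul, LinearMap.id_apply, LinearMap.mulRight_apply, twistedMul_tmul_tmul_one,
      hHex1.apply_mul_tmul, ← twistedMul_tmul_left]
  | add z z' hz hz' => simp only [map_add, add_tmul, hz, hz']

theorem apply_map_mulLeft_mulRight_of_hexagon (hHex1 : HexagonLeft Ψ) (hHex2 : HexagonRight Ψ)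
    (β : B) (α : A) (w : B ⊗[ℂ] A) :
    Ψ (map (LinearMap.mulLeft ℂ β) (LinearMap.mulRight ℂ α) w) =
      twistedMul A B Ψ (map (Ψ ∘ₗ mk ℂ B A β) (Ψ ∘ₗ (mk ℂ B A).flip α) (Ψ w)) := by
  have sandwich : ∀ z, twistedMul A B Ψ (twistedMul A B Ψ ((1 ⊗ₜ β) ⊗ₜ z) ⊗ₜ (α ⊗ₜ 1)) =
      twistedMul A B Ψ (map (Ψ ∘ₗ mk ℂ B A β) (Ψ ∘ₗ (mk ℂ B A).flip α) z) := by
    intro z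
    induction z using TensorProduct.induction_on with
    | zero => simp
    | tmul x y =>
      rw [twistedMul_one_tmul_tmul, hHex1.twistedMul_map_mulRight_tmul_one]
      rfl
    | add z z' hz hz' => simp only [tmul_add, map_add, add_tmul, hz, hz']
  induction w using TensorProduct.induction_on with
  | zero => simp
  | tmul b a =>
    rw [map_tmul, LinearMap.mulLeft_apply, LinearMap.mulRight_apply,
      hHex2.apply_tmul_mul, hHex1.apply_mul_tmul, sandwich]
  | add w w' hw hw' => simp only [map_add, hw, hw']

end Twist

section Star

variable {R A B : Type*} [CommSemiring R] [Semiring A] [Semiring B] [Algebra R A] [Algebra R B]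
  {sA : A → A} {sB : B → B} {sT : A ⊗[R] B →+ A ⊗[R] B}

theorem involutive_of_apply_tmul (hsT : ∀ a b, sT (a ⊗ₜ b) = sA a ⊗ₜ sB b)
    (hsA : ∀ a, sA (sA a) = a) (hsB : ∀ b, sB (sB b) = b) :
    Function.Involutive sT := by
  intro z
  induction z using TensorProduct.induction_on with
  | zero => simp
  | tmul a b => rw [hsT, hsT, hsA, hsB]
  | add z z' hz hz' => rw [map_add, map_add, hz, hz']

theorem comm_apply_map_mulLeft_mulRight
    (hsT : ∀ a b, sT (a ⊗ₜ b) = sA a ⊗ₜ sB b) (hsA : ∀ a a', sA (a * a') = sA a' * sA a)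
    (hsB : ∀ b b', sB (b * b') = sB b' * sB b) (a : A) (d : B) (z : A ⊗[R] B) :
    TensorProduct.comm R A B (sT (map (LinearMap.mulLeft R a) (LinearMap.mulRight R d) z)) =
      map (LinearMap.mulLeft R (sB d)) (LinearMap.mulRight R (sA a))
        (TensorProduct.comm R A B (sT z)) := by
  induction z using TensorProduct.induction_on with
  | zero => simp
  | tmul x y => simp [hsT, hsA, hsB]
  | add z z' hz hz' => simp only [map_add, hz, hz']

end Star

theorem apply_comm_twistedMul_of_hexagon {A B : Type*} [Ring A] [Ring B] [Algebra ℂ A]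
    [Algebra ℂ B]
    {sA : A → A} {sB : B → B} {sT : A ⊗[ℂ] B →+ A ⊗[ℂ] B}
    (hsT : ∀ a b, sT (a ⊗ₜ b) = sA a ⊗ₜ sB b)
    (hsA : ∀ a a', sA (a * a') = sA a' * sA a) (hsB : ∀ b b', sB (b * b') = sB b' * sB b)
    {Ψ : B ⊗[ℂ] A →ₗ[ℂ] A ⊗[ℂ] B} (hHex1 : HexagonLeft Ψ) (hHex2 : HexagonRight Ψ)
    (hcompat : ∀ u, sT u = Ψ (TensorProduct.comm ℂ A B (sT (Ψ (TensorProduct.comm ℂ A B u)))))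
    (u v : A ⊗[ℂ] B) :
    Ψ (TensorProduct.comm ℂ A B (sT (twistedMul A B Ψ (u ⊗ₜ v)))) =
      twistedMul A B Ψ (Ψ (TensorProduct.comm ℂ A B (sT v)) ⊗ₜ
        Ψ (TensorProduct.comm ℂ A B (sT u))) := by
  induction u using TensorProduct.induction_on with
  | zero => simp
  | add u u' hu hu' => simp only [add_tmul, tmul_add, map_add, hu, hu']
  | tmul a b =>
    induction v using TensorProduct.induction_on with
    | zero => simp
    | add v v' hv hv' => simp only [add_tmul, tmul_add, map_add, hv, hv']
    | tmul c d =>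
      have hcompat_bc : Ψ (TensorProduct.comm ℂ A B (sT (Ψ (b ⊗ₜ c)))) = sA c ⊗ₜ sB b := by
        simpa [hsT] using (hcompat (c ⊗ₜ b)).symm
      rw [twistedMul_tmul_tmul, comm_apply_map_mulLeft_mulRight hsT hsA hsB,
        apply_map_mulLeft_mulRight_of_hexagon hHex1 hHex2, hcompat_bc]
      simp [hsT]
theorem stmt8_general (A B : Type*) [Ring A] [Ring B] [Algebra ℂ A] [Algebra ℂ B]
    (sA : A → A) (sB : B → B)
    -- ∗_A is a conjugate-linear anti-multiplicative involution, similarly ∗_B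
    (hsA_mul : ∀ a a', sA (a * a') = sA a' * sA a)
    (hsA_inv : ∀ a, sA (sA a) = a)
    (hsB_mul : ∀ b b', sB (b * b') = sB b' * sB b)
    (hsB_inv : ∀ b, sB (sB b) = b)
    -- the map ∗_A ⊗ ∗_B on A ⊗ B
    (sT : A ⊗[ℂ] B → A ⊗[ℂ] B)
    (hsT_add : ∀ u v, sT (u + v) = sT u + sT v)
    (hsT_tmul : ∀ (a : A) (b : B), sT (a ⊗ₜ[ℂ] b) = sA a ⊗ₜ[ℂ] sB b)
    (Ψ : B ⊗[ℂ] A →ₗ[ℂ] A ⊗[ℂ] B)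
    -- hexagon conditions
    (hHex1 :
      (TensorProduct.map (LinearMap.id : A →ₗ[ℂ] A) (LinearMap.mul' ℂ B))
        ∘ₗ (TensorProduct.assoc ℂ A B B).toLinearMap
        ∘ₗ TensorProduct.map Ψ LinearMap.id
        ∘ₗ (TensorProduct.assoc ℂ B A B).symm.toLinearMap
        ∘ₗ TensorProduct.map LinearMap.id Ψ
      = Ψ ∘ₗ TensorProduct.map (LinearMap.mul' ℂ B) LinearMap.id
          ∘ₗ (TensorProduct.assoc ℂ B B A).symm.toLinearMap)
    (hHex2 :
      (TensorProduct.map (LinearMap.mul' ℂ A) (LinearMap.id : B →ₗ[ℂ] B))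
        ∘ₗ (TensorProduct.assoc ℂ A A B).symm.toLinearMap
        ∘ₗ TensorProduct.map LinearMap.id Ψ
        ∘ₗ (TensorProduct.assoc ℂ A B A).toLinearMap
        ∘ₗ TensorProduct.map Ψ LinearMap.id
      = Ψ ∘ₗ TensorProduct.map LinearMap.id (LinearMap.mul' ℂ A)
          ∘ₗ (TensorProduct.assoc ℂ B A A).toLinearMap)
    -- Ψ' := Ψ ∘ τ and the *-compatibility condition ∗⊗ = Ψ'∘∗⊗∘Ψ'
    (Ψ' : A ⊗[ℂ] B → A ⊗[ℂ] B)
    (hΨ' : ∀ u, Ψ' u = Ψ ((TensorProduct.comm ℂ A B) u))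
    (hcompat : ∀ u, sT u = Ψ' (sT (Ψ' u)))
    -- ∗_Ψ := Ψ' ∘ ∗⊗
    (starΨ : A ⊗[ℂ] B → A ⊗[ℂ] B)
    (hstarΨ : ∀ u, starΨ u = Ψ' (sT u)) :
    (∀ u, starΨ (starΨ u) = u) ∧
    (∀ u v : A ⊗[ℂ] B,
      starΨ (twistedMul A B Ψ (u ⊗ₜ[ℂ] v)) =
        twistedMul A B Ψ (starΨ v ⊗ₜ[ℂ] starΨ u)) := by
  let S : A ⊗[ℂ] B →+ A ⊗[ℂ] B := AddMonoidHom.mk' sT hsT_add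
  obtain rfl : Ψ' = fun u => Ψ (TensorProduct.comm ℂ A B u) := funext hΨ'
  obtain rfl : starΨ = fun u => Ψ (TensorProduct.comm ℂ A B (sT u)) := funext hstarΨ
  refine ⟨fun u => ?_, apply_comm_twistedMul_of_hexagon (sT := S) hsT_tmul hsA_mul hsB_mul
    hHex1 hHex2 hcompat⟩
  rw [← hcompat]
  exact involutive_of_apply_tmul (sT := S) hsT_tmul hsA_inv hsB_inv u

/-- if A, B are unital *-algebras and Ψ is a normal twist satisfying the
hexagon conditions, such that Ψ' := Ψ∘τ is *-compatible (i.e. ∗⊗ = Ψ'∘∗⊗∘Ψ' where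
∗⊗ = ∗_A ⊗ ∗_B), then ∗_Ψ := Ψ∘τ∘∗⊗ is an involution of the twisted tensor product
algebra A ⊗_Ψ B: it squares to the identity and is anti-multiplicative for m_Ψ. -/
theorem stmt8 (A B : Type*) [Ring A] [Ring B] [Algebra ℂ A] [Algebra ℂ B]
    (sA : A → A) (sB : B → B)
    -- ∗_A is a conjugate-linear anti-multiplicative involution, similarly ∗_B
    (hsA_add : ∀ a a', sA (a + a') = sA a + sA a')
    (hsA_smul : ∀ (c : ℂ) a, sA (c • a) = (starRingEnd ℂ c) • sA a)
    (hsA_mul : ∀ a a', sA (a * a') = sA a' * sA a)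
    (hsA_inv : ∀ a, sA (sA a) = a) (hsA_one : sA 1 = 1)
    (hsB_add : ∀ b b', sB (b + b') = sB b + sB b')
    (hsB_smul : ∀ (c : ℂ) b, sB (c • b) = (starRingEnd ℂ c) • sB b)
    (hsB_mul : ∀ b b', sB (b * b') = sB b' * sB b)
    (hsB_inv : ∀ b, sB (sB b) = b) (hsB_one : sB 1 = 1)
    -- the map ∗_A ⊗ ∗_B on A ⊗ B
    (sT : A ⊗[ℂ] B → A ⊗[ℂ] B)
    (hsT_add : ∀ u v, sT (u + v) = sT u + sT v)
    (hsT_tmul : ∀ (a : A) (b : B), sT (a ⊗ₜ[ℂ] b) = sA a ⊗ₜ[ℂ] sB b)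
    (Ψ : B ⊗[ℂ] A →ₗ[ℂ] A ⊗[ℂ] B)
    -- normality
    (hN1 : ∀ b : B, Ψ (b ⊗ₜ[ℂ] (1 : A)) = (1 : A) ⊗ₜ[ℂ] b)
    (hN2 : ∀ a : A, Ψ ((1 : B) ⊗ₜ[ℂ] a) = a ⊗ₜ[ℂ] (1 : B))
    -- hexagon conditions
    (hHex1 :
      (TensorProduct.map (LinearMap.id : A →ₗ[ℂ] A) (LinearMap.mul' ℂ B))
        ∘ₗ (TensorProduct.assoc ℂ A B B).toLinearMap
        ∘ₗ TensorProduct.map Ψ LinearMap.id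
        ∘ₗ (TensorProduct.assoc ℂ B A B).symm.toLinearMap
        ∘ₗ TensorProduct.map LinearMap.id Ψ
      = Ψ ∘ₗ TensorProduct.map (LinearMap.mul' ℂ B) LinearMap.id
          ∘ₗ (TensorProduct.assoc ℂ B B A).symm.toLinearMap)
    (hHex2 :
      (TensorProduct.map (LinearMap.mul' ℂ A) (LinearMap.id : B →ₗ[ℂ] B))
        ∘ₗ (TensorProduct.assoc ℂ A A B).symm.toLinearMap
        ∘ₗ TensorProduct.map LinearMap.id Ψ
        ∘ₗ (TensorProduct.assoc ℂ A B A).toLinearMap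
        ∘ₗ TensorProduct.map Ψ LinearMap.id
      = Ψ ∘ₗ TensorProduct.map LinearMap.id (LinearMap.mul' ℂ A)
          ∘ₗ (TensorProduct.assoc ℂ B A A).toLinearMap)
    -- Ψ' := Ψ ∘ τ and the *-compatibility condition ∗⊗ = Ψ'∘∗⊗∘Ψ'
    (Ψ' : A ⊗[ℂ] B → A ⊗[ℂ] B)
    (hΨ' : ∀ u, Ψ' u = Ψ ((TensorProduct.comm ℂ A B) u))
    (hcompat : ∀ u, sT u = Ψ' (sT (Ψ' u)))
    -- ∗_Ψ := Ψ' ∘ ∗⊗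
    (starΨ : A ⊗[ℂ] B → A ⊗[ℂ] B)
    (hstarΨ : ∀ u, starΨ u = Ψ' (sT u)) :
    (∀ u, starΨ (starΨ u) = u) ∧
    (∀ u v : A ⊗[ℂ] B,
      starΨ (twistedMul A B Ψ (u ⊗ₜ[ℂ] v)) =
        twistedMul A B Ψ (starΨ v ⊗ₜ[ℂ] starΨ u)) :=
  stmt8_general A B sA sB hsA_mul hsA_inv hsB_mul hsB_inv sT hsT_add hsT_tmul Ψ hHex1 hHex2 Ψ' hΨ'
    hcompat starΨ hstarΨ
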